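/- Let f : [0,∞) × ℝ³ → ℝ be nonnegative, C¹ in time, and suppose there are constants A₁' ≥ 0, A₂ > 0 and γ ∈ (0,1] such that for all t ≥ 0 and v ∈ ℝ³, ∂_t f(t,v) ≤ A₁' ⟨v⟩^γ + A₂ S(t) ⟨v⟩^γ − 2A₂ f(t,v) ⟨v⟩^γ, where S(t) := sup_{0≤t'≤t} ‖f(t')‖_∞ is assumed finite for all t. Then sup_{t≥0} ‖f(t)‖_∞ ≤ max(‖f(0)‖_∞, A₁'/A₂). -/

import Mathlib

open MeasureTheory

noncomputable abbrev E3 := EuclideanSpace ℝ (Fin 3)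

/-- The Japanese bracket `⟨w⟩ = (1+|w|²)^{1/2}`. -/
noncomputable def jbr (w : E3) : ℝ := Real.sqrt (1 + ‖w‖ ^ 2)

/-!
For fixed `t`, put `S = S(t)`. For every `x ≤ t` the differential inequality gives
`∂ₓ f(x,v) ≤ 2A₂⟨v⟩^γ (K - f(x,v))` with `K = A₁'/(2A₂) + S/2`, so `f(·,v)` cannot cross the
level `max(‖f(0)‖_∞, K)` on `[0,t]`. Taking the supremum, `S ≤ max(‖f(0)‖_∞, A₁'/(2A₂) + S/2)`,
and since `S` is finite this forces `S ≤ max(‖f(0)‖_∞, A₁'/A₂)`.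
-/

open Set

theorem le_of_hasDerivAt_le_mul_sub {g g' c : ℝ → ℝ} {a b K M : ℝ}
    (hg : ∀ x ∈ Icc a b, HasDerivAt g (g' x) x) (hc : ∀ x ∈ Ico a b, 0 < c x)
    (hg' : ∀ x ∈ Ico a b, g' x ≤ c x * (K - g x)) (ha : g a ≤ M) (hKM : K ≤ M) :
    ∀ x ∈ Icc a b, g x ≤ M := by
  intro x hx
  refine le_of_forall_gt_imp_ge_of_dense fun M' hM' => ?_
  refine image_le_of_deriv_right_lt_deriv_boundary (B := fun _ => M') (B' := fun _ => 0)
    (fun y hy => (hg y hy).continuousAt.continuousWithinAt)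
    (fun y hy => (hg y (Ico_subset_Icc_self hy)).hasDerivWithinAt) (ha.trans hM'.le)
    (fun y => hasDerivAt_const y M') (fun y hy hgy => ?_) hx
  calc g' y ≤ c y * (K - g y) := hg' y hy
    _ < 0 := mul_neg_of_pos_of_neg (hc y hy) (by linarith)

theorem le_max_of_le_max_half_add_half {S C a : ℝ} (h : S ≤ max C (a / 2 + S / 2)) :
    S ≤ max C a := by
  rcases le_max_iff.mp h with h | h
  · exact le_max_of_le_left h
  · exact le_max_of_le_right (by linarith)

section SupOverIcc

variable {V : Type*} {f : ℝ → V → ℝ} {t : ℝ}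

theorem le_iSup_Icc_prod (hf : BddAbove (range fun p : Icc (0:ℝ) t × V => f p.1 p.2))
    {s : ℝ} (hs : s ∈ Icc 0 t) (w : V) : f s w ≤ ⨆ p : Icc (0:ℝ) t × V, f p.1 p.2 :=
  le_ciSup hf (⟨⟨s, hs⟩, w⟩ : Icc (0:ℝ) t × V)

theorem iSup_Icc_prod_le_of_mem [Nonempty V]
    (hf : BddAbove (range fun p : Icc (0:ℝ) t × V => f p.1 p.2)) {x : ℝ} (hx : x ∈ Icc 0 t) :
    ⨆ p : Icc (0:ℝ) x × V, f p.1 p.2 ≤ ⨆ p : Icc (0:ℝ) t × V, f p.1 p.2 := by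
  have : Nonempty (Icc (0:ℝ) x) := ⟨⟨0, le_rfl, hx.1⟩⟩
  exact ciSup_le fun p => le_iSup_Icc_prod hf ⟨p.1.2.1, p.1.2.2.trans hx.2⟩ p.2

theorem bddAbove_range_zero (hf : BddAbove (range fun p : Icc (0:ℝ) t × V => f p.1 p.2))
    (ht : 0 ≤ t) : BddAbove (range (f 0)) :=
  hf.mono <| range_subset_iff.mpr fun w =>
    mem_range_self (f := fun p : Icc (0:ℝ) t × V => f p.1 p.2) (⟨0, le_rfl, ht⟩, w)

end SupOverIcc

theorem jbr_rpow_pos (w : E3) (γ : ℝ) : 0 < jbr w ^ γ :=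
  Real.rpow_pos_of_pos (Real.sqrt_pos.mpr (by positivity)) γ

theorem Linfty_uniform_bound_general (f f' : ℝ → E3 → ℝ) (A₁' A₂ γ : ℝ)
    (hA2 : 0 < A₂)
    (hderiv : ∀ t v, HasDerivAt (fun s => f s v) (f' t v) t)
    (hbdd : ∀ t ≥ (0:ℝ), BddAbove (Set.range fun p : Set.Icc (0:ℝ) t × E3 => f p.1 p.2))
    (hineq : ∀ t ≥ (0:ℝ), ∀ v : E3,
      f' t v ≤ A₁' * jbr v ^ γ
        + A₂ * (⨆ p : Set.Icc (0:ℝ) t × E3, f p.1 p.2) * jbr v ^ γ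
        - 2 * A₂ * f t v * jbr v ^ γ) :
    ∀ t ≥ (0:ℝ), ∀ v : E3, f t v ≤ max (⨆ w : E3, f 0 w) (A₁' / A₂) := by
  intro t ht v
  set S := ⨆ p : Icc (0:ℝ) t × E3, f p.1 p.2
  have hrate : ∀ w, ∀ x ∈ Ico 0 t,
      f' x w ≤ 2 * A₂ * jbr w ^ γ * (A₁' / A₂ / 2 + S / 2 - f x w) := by
    intro w x hx
    have hSx := iSup_Icc_prod_le_of_mem (hbdd t ht) (Ico_subset_Icc_self hx)
    have hJ := jbr_rpow_pos w γ
    calc f' x w ≤ A₁' * jbr w ^ γ + A₂ * (⨆ p : Icc (0:ℝ) x × E3, f p.1 p.2) * jbr w ^ γ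
          - 2 * A₂ * f x w * jbr w ^ γ := hineq x hx.1 w
      _ ≤ A₁' * jbr w ^ γ + A₂ * S * jbr w ^ γ - 2 * A₂ * f x w * jbr w ^ γ := by gcongr
      _ = 2 * A₂ * jbr w ^ γ * (A₁' / A₂ / 2 + S / 2 - f x w) := by field_simp
  have hS : S ≤ max (⨆ w : E3, f 0 w) (A₁' / A₂ / 2 + S / 2) := by
    have : Nonempty (Icc (0:ℝ) t) := ⟨⟨0, le_rfl, ht⟩⟩
    refine ciSup_le fun p => le_of_hasDerivAt_le_mul_sub (g := fun s => f s p.2)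
      (fun x _ => hderiv x p.2) (fun _ _ => by have := jbr_rpow_pos p.2 γ; positivity)
      (hrate p.2) ?_ (le_max_right _ _) p.1 p.1.2
    exact (le_ciSup (bddAbove_range_zero (hbdd t ht) ht) p.2).trans (le_max_left _ _)
  exact (le_iSup_Icc_prod (hbdd t ht) ⟨ht, le_rfl⟩ v).trans (le_max_of_le_max_half_add_half hS)

/-- Uniform-in-time `L^∞` bound from the pointwise differential inequality
`∂_t f ≤ A₁'⟨v⟩^γ + A₂ S(t) ⟨v⟩^γ − 2A₂ f ⟨v⟩^γ`, where
`S(t) = sup_{0 ≤ t' ≤ t} ‖f(t')‖_∞` is assumed finite: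
`sup_{t ≥ 0} ‖f(t)‖_∞ ≤ max(‖f(0)‖_∞, A₁'/A₂)`. -/
theorem Linfty_uniform_bound (f f' : ℝ → E3 → ℝ) (A₁' A₂ γ : ℝ)
    (hA1 : 0 ≤ A₁') (hA2 : 0 < A₂) (hγ0 : 0 < γ) (hγ1 : γ ≤ 1)
    (hpos : ∀ t v, 0 ≤ f t v)
    (hderiv : ∀ t v, HasDerivAt (fun s => f s v) (f' t v) t)
    (hbdd : ∀ t ≥ (0:ℝ), BddAbove (Set.range fun p : Set.Icc (0:ℝ) t × E3 => f p.1 p.2))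
    (hineq : ∀ t ≥ (0:ℝ), ∀ v : E3,
      f' t v ≤ A₁' * jbr v ^ γ
        + A₂ * (⨆ p : Set.Icc (0:ℝ) t × E3, f p.1 p.2) * jbr v ^ γ
        - 2 * A₂ * f t v * jbr v ^ γ) :
    ∀ t ≥ (0:ℝ), ∀ v : E3, f t v ≤ max (⨆ w : E3, f 0 w) (A₁' / A₂) :=
  Linfty_uniform_bound_general f f' A₁' A₂ γ hA2 hderiv hbdd hineq
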